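/- Let X be an almost square Banach space and Y ⊆ X a closed subspace such that X/Y has the Schur property. Then Y is almost square. -/
import Mathlib


open Filter Topology

noncomputable section

/-- A Banach space is octahedral (OH). -/
def IsOctahedral (Z : Type*) [NormedAddCommGroup Z] : Prop :=
  ∀ (n : ℕ) (z : Fin n → Z), (∀ i, ‖z i‖ = 1) → ∀ ε : ℝ, 0 < ε →
    ∃ w : Z, ‖w‖ = 1 ∧ ∀ i, ‖z i + w‖ > 2 - ε

/-- Locally octahedral (LOH). -/
def IsLocallyOctahedral (Z : Type*) [NormedAddCommGroup Z] : Prop :=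
  ∀ z : Z, ‖z‖ = 1 → ∀ ε : ℝ, 0 < ε →
    ∃ w : Z, ‖w‖ = 1 ∧ ‖z + w‖ > 2 - ε ∧ ‖z - w‖ > 2 - ε

/-- Weakly octahedral (WOH). -/
def IsWeaklyOctahedral (X : Type*) [NormedAddCommGroup X] [NormedSpace ℝ X] : Prop :=
  ∀ (n : ℕ) (z : Fin n → X), (∀ i, ‖z i‖ = 1) → ∀ f : X →L[ℝ] ℝ, ‖f‖ ≤ 1 →
    ∀ ε : ℝ, 0 < ε → ∃ y : X, ‖y‖ = 1 ∧ ∀ i, ∀ t : ℝ, 0 < t →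
      ‖z i + t • y‖ ≥ (1 - ε) * (|f (z i)| + t) ∧
      ‖z i - t • y‖ ≥ (1 - ε) * (|f (z i)| + t)

/-- Almost square (ASQ), sequential formulation. -/
def IsASQ (Z : Type*) [NormedAddCommGroup Z] : Prop :=
  ∀ (n : ℕ) (z : Fin n → Z), (∀ i, ‖z i‖ = 1) →
    ∃ w : ℕ → Z, (∀ k, ‖w k‖ ≤ 1) ∧
      Tendsto (fun k => ‖w k‖) atTop (nhds 1) ∧
      ∀ i, Tendsto (fun k => ‖z i + w k‖) atTop (nhds 1) ∧
           Tendsto (fun k => ‖z i - w k‖) atTop (nhds 1)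

/-- Almost square (ASQ), finite-ε formulation. -/
def IsASQeps (Z : Type*) [NormedAddCommGroup Z] : Prop :=
  ∀ (n : ℕ) (z : Fin n → Z), (∀ i, ‖z i‖ = 1) → ∀ ε : ℝ, 0 < ε →
    ∃ w : Z, ‖w‖ = 1 ∧ ∀ i, ‖z i + w‖ ≤ 1 + ε ∧ ‖z i - w‖ ≤ 1 + ε

/-- Locally almost square (LASQ), sequential formulation. -/
def IsLASQ (Z : Type*) [NormedAddCommGroup Z] : Prop :=
  ∀ z : Z, ‖z‖ = 1 →
    ∃ w : ℕ → Z, (∀ k, ‖w k‖ ≤ 1) ∧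
      Tendsto (fun k => ‖w k‖) atTop (nhds 1) ∧
      Tendsto (fun k => ‖z + w k‖) atTop (nhds 1) ∧
      Tendsto (fun k => ‖z - w k‖) atTop (nhds 1)

/-- Locally almost square (LASQ), ε formulation. -/
def IsLASQeps (Z : Type*) [NormedAddCommGroup Z] : Prop :=
  ∀ z : Z, ‖z‖ = 1 → ∀ ε : ℝ, 0 < ε →
    ∃ w : Z, ‖w‖ = 1 ∧ ‖z + w‖ ≤ 1 + ε ∧ ‖z - w‖ ≤ 1 + ε

/-- Weakly almost square (WASQ). -/
def IsWASQ (Z : Type*) [NormedAddCommGroup Z] [NormedSpace ℝ Z] : Prop :=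
  ∀ z : Z, ‖z‖ = 1 →
    ∃ w : ℕ → Z, (∀ k, ‖w k‖ ≤ 1) ∧
      Tendsto (fun k => ‖w k‖) atTop (nhds 1) ∧
      Tendsto (fun k => ‖z + w k‖) atTop (nhds 1) ∧
      Tendsto (fun k => ‖z - w k‖) atTop (nhds 1) ∧
      ∀ f : Z →L[ℝ] ℝ, Tendsto (fun k => f (w k)) atTop (nhds 0)

/-- Local diameter two property: every slice of the unit ball has diameter two. -/
def HasLD2P (Z : Type*) [NormedAddCommGroup Z] [NormedSpace ℝ Z] : Prop :=
  ∀ f : Z →L[ℝ] ℝ, ‖f‖ = 1 → ∀ α : ℝ, 0 < α →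
    Metric.diam {x : Z | ‖x‖ ≤ 1 ∧ 1 - α < f x} = 2

/-- Diameter two property: every nonempty relatively weakly open subset of the unit
ball has diameter two. -/
def HasD2P (Z : Type*) [NormedAddCommGroup Z] [NormedSpace ℝ Z] : Prop :=
  ∀ U : Set Z, U.Nonempty → (∀ x ∈ U, ‖x‖ ≤ 1) →
    (∀ x ∈ U, ∃ (n : ℕ) (f : Fin n → Z →L[ℝ] ℝ) (δ : ℝ), 0 < δ ∧
      {y : Z | ‖y‖ ≤ 1 ∧ ∀ i, |f i y - f i x| < δ} ⊆ U) →
    Metric.diam U = 2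

/-- The Schur property. -/
def HasSchurProperty (Z : Type*) [SeminormedAddCommGroup Z] [NormedSpace ℝ Z] : Prop :=
  ∀ (u : ℕ → Z) (x : Z),
    (∀ f : Z →L[ℝ] ℝ, Tendsto (fun k => f (u k)) atTop (nhds (f x))) →
    Tendsto (fun k => ‖u k - x‖) atTop (nhds 0)

/-- The Dunford–Pettis property: every weakly compact operator is
weak-to-norm sequentially continuous. -/
def HasDPP (X : Type*) [NormedAddCommGroup X] [NormedSpace ℝ X] : Prop :=
  ∀ (Y : Type) (_ : NormedAddCommGroup Y) (_ : NormedSpace ℝ Y) (_ : CompleteSpace Y)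
    (T : X →L[ℝ] Y),
    (∃ K : Set (WeakSpace ℝ Y), IsCompact K ∧
      ∀ x : X, ‖x‖ ≤ 1 → toWeakSpace ℝ Y (T x) ∈ K) →
    ∀ (u : ℕ → X) (x : X),
      (∀ f : X →L[ℝ] ℝ, Tendsto (fun k => f (u k)) atTop (nhds (f x))) →
      Tendsto (fun k => ‖T (u k) - T x‖) atTop (nhds 0)

/-- `Z`, together with the bilinear-type map `t`, is (a realization of) the injective
tensor product `X ⊗̂_ε Y`: the span of elementary tensors is dense and the norm of any
linear combination of elementary tensors is given by the injective tensor norm. -/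
def IsInjTensorProduct (X Y Z : Type*) [NormedAddCommGroup X] [NormedSpace ℝ X]
    [NormedAddCommGroup Y] [NormedSpace ℝ Y] [NormedAddCommGroup Z] [NormedSpace ℝ Z]
    (t : X → Y → Z) : Prop :=
  (Submodule.span ℝ (Set.range fun p : X × Y => t p.1 p.2)).topologicalClosure = ⊤ ∧
  ∀ l : List (X × Y),
    ‖(l.map fun p => t p.1 p.2).sum‖ =
      sSup {s : ℝ | ∃ (f : X →L[ℝ] ℝ) (g : Y →L[ℝ] ℝ), ‖f‖ ≤ 1 ∧ ‖g‖ ≤ 1 ∧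
        s = |(l.map fun p => f p.1 * g p.2).sum|}

/-- `Z`, together with the map `t`, is (a realization of) the projective tensor product
`X ⊗̂_π Y`: the span of elementary tensors is dense and the norm of any combination of
elementary tensors is the infimum of `Σ ‖xᵢ‖‖yᵢ‖` over all representations (two formal
combinations represent the same tensor iff they agree against all pairs of functionals). -/
def IsProjTensorProduct (X Y Z : Type*) [NormedAddCommGroup X] [NormedSpace ℝ X]
    [NormedAddCommGroup Y] [NormedSpace ℝ Y] [NormedAddCommGroup Z] [NormedSpace ℝ Z]
    (t : X → Y → Z) : Prop :=
  (Submodule.span ℝ (Set.range fun p : X × Y => t p.1 p.2)).topologicalClosure = ⊤ ∧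
  ∀ l : List (X × Y),
    ‖(l.map fun p => t p.1 p.2).sum‖ =
      sInf {s : ℝ | ∃ l' : List (X × Y),
        (∀ (f : X →L[ℝ] ℝ) (g : Y →L[ℝ] ℝ),
          (l'.map fun p => f p.1 * g p.2).sum = (l.map fun p => f p.1 * g p.2).sum) ∧
        s = (l'.map fun p => ‖p.1‖ * ‖p.2‖).sum}

/-- `Z`, together with the diagonal map `δ : x ↦ x^N`, is (a realization of) the `N`-fold
injective symmetric tensor product `⊗̂_{ε,s,N} X`. -/
def IsInjSymTensorProduct (X : Type*) [NormedAddCommGroup X] [NormedSpace ℝ X] (N : ℕ)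
    (Z : Type*) [NormedAddCommGroup Z] [NormedSpace ℝ Z] (δ : X → Z) : Prop :=
  (Submodule.span ℝ (Set.range δ)).topologicalClosure = ⊤ ∧
  ∀ l : List (ℝ × X),
    ‖(l.map fun p => p.1 • δ p.2).sum‖ =
      sSup {s : ℝ | ∃ f : X →L[ℝ] ℝ, ‖f‖ ≤ 1 ∧
        s = |(l.map fun p => p.1 * (f p.2) ^ N).sum|}

/-- `Z`, together with the diagonal map `δ : x ↦ x^N`, is (a realization of) the `N`-fold
projective symmetric tensor product `⊗̂_{π,s,N} X`. -/
def IsProjSymTensorProduct (X : Type*) [NormedAddCommGroup X] [NormedSpace ℝ X] (N : ℕ)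
    (Z : Type*) [NormedAddCommGroup Z] [NormedSpace ℝ Z] (δ : X → Z) : Prop :=
  (Submodule.span ℝ (Set.range δ)).topologicalClosure = ⊤ ∧
  ∀ l : List (ℝ × X),
    ‖(l.map fun p => p.1 • δ p.2).sum‖ =
      sInf {s : ℝ | ∃ l' : List (ℝ × X),
        (∀ f : X →L[ℝ] ℝ,
          (l'.map fun p => p.1 * (f p.2) ^ N).sum = (l.map fun p => p.1 * (f p.2) ^ N).sum) ∧
        s = (l'.map fun p => |p.1| * ‖p.2‖ ^ N).sum}

/-- An operator `T : X* → Y` is weak*-to-weakly continuous. -/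
def WeakStarToWeakContinuous {X Y : Type*} [NormedAddCommGroup X] [NormedSpace ℝ X]
    [NormedAddCommGroup Y] [NormedSpace ℝ Y] (T : (X →L[ℝ] ℝ) →L[ℝ] Y) : Prop :=
  ∀ g : Y →L[ℝ] ℝ, Continuous fun f : WeakDual ℝ X => g (T f)

/-- The elementary tensor `x ⊗ y` regarded as the operator `x* ↦ x*(x) • y` in `L(X*, Y)`. -/
def elemTensor {X Y : Type*} [NormedAddCommGroup X] [NormedSpace ℝ X]
    [NormedAddCommGroup Y] [NormedSpace ℝ Y] (x : X) (y : Y) : (X →L[ℝ] ℝ) →L[ℝ] Y :=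
  (ContinuousLinearMap.apply ℝ ℝ x).smulRight y

/-- `n(Z, u) = 1`, i.e. `D(Z,u) = {f ∈ B_{Z*} : f(u) = 1}` is a norming set for `Z`. -/
def NormOneUnitary (Z : Type*) [NormedAddCommGroup Z] [NormedSpace ℝ Z] (u : Z) : Prop :=
  ‖u‖ = 1 ∧ ∀ z : Z, ‖z‖ ≤ sSup {r : ℝ | ∃ g : Z →L[ℝ] ℝ, ‖g‖ ≤ 1 ∧ g u = 1 ∧ r = |g z|}

/-- Asplund space: every closed separable subspace has separable dual. -/
def IsAsplund (Y : Type*) [NormedAddCommGroup Y] [NormedSpace ℝ Y] : Prop :=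
  ∀ S : Submodule ℝ Y, IsClosed (S : Set Y) → TopologicalSpace.SeparableSpace S →
    TopologicalSpace.SeparableSpace ((↥S) →L[ℝ] ℝ)

/-- The (metric) approximation-type property: finite-rank operators approximate the
identity uniformly on compact sets. -/
def HasAP (E : Type*) [NormedAddCommGroup E] [NormedSpace ℝ E] : Prop :=
  ∀ K : Set E, IsCompact K → ∀ ε : ℝ, 0 < ε →
    ∃ T : E →L[ℝ] E, FiniteDimensional ℝ (LinearMap.range (T : E →ₗ[ℝ] E)) ∧
      ∀ x ∈ K, ‖T x - x‖ ≤ ε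

end

section AuxASQ

set_option linter.unusedSectionVars false

variable {E : Type*} [NormedAddCommGroup E] [NormedSpace ℝ E]

lemma asq_fin (hX : IsASQ E) {ι : Type*} [Fintype ι] (z : ι → E) (hz : ∀ i, ‖z i‖ = 1)
    {ε : ℝ} (hε : 0 < ε) :
    ∃ w : E, ‖w‖ ≤ 1 ∧ 1 - ε < ‖w‖ ∧ ∀ i, ‖z i + w‖ < 1 + ε ∧ ‖z i - w‖ < 1 + ε := by
  obtain ⟨w, hw1, hw2, hw3⟩ := hX (Fintype.card ι) (z ∘ (Fintype.equivFin ι).symm)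
    (fun j => hz _)
  have h1 : ∀ᶠ k in atTop, 1 - ε < ‖w k‖ :=
    hw2.eventually (eventually_gt_nhds (by linarith))
  have h2 : ∀ᶠ k in atTop, ∀ j : Fin (Fintype.card ι),
      ‖(z ∘ (Fintype.equivFin ι).symm) j + w k‖ < 1 + ε ∧
      ‖(z ∘ (Fintype.equivFin ι).symm) j - w k‖ < 1 + ε := by
    rw [eventually_all]
    intro j
    exact ((hw3 j).1.eventually (eventually_lt_nhds (by linarith))).and
      ((hw3 j).2.eventually (eventually_lt_nhds (by linarith)))
  obtain ⟨k, hk1, hk2⟩ := (h1.and h2).exists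
  refine ⟨w k, hw1 k, hk1, fun i => ?_⟩
  have := hk2 (Fintype.equivFin ι i)
  simpa using this

set_option maxHeartbeats 1000000 in
/-- In an ASQ space the almost-square sequence can be chosen weakly null. -/
lemma asq_weakly_null (hX : IsASQ E) (N : ℕ) (y : Fin N → E) (hy : ∀ i, ‖y i‖ = 1) :
    ∃ W : ℕ → E, (∀ m, ‖W m‖ ≤ 1) ∧ Tendsto (fun m => ‖W m‖) atTop (nhds 1) ∧
      (∀ i, Tendsto (fun m => ‖y i + W m‖) atTop (nhds 1) ∧
            Tendsto (fun m => ‖y i - W m‖) atTop (nhds 1)) ∧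
      ∀ f : E →L[ℝ] ℝ, Tendsto (fun m => f (W m)) atTop (nhds 0) := by
  classical
  set ε : ℕ → ℝ := fun m => (1/2 : ℝ)^(m+1) with hεdef
  have hεpos : ∀ m, 0 < ε m := fun m => by positivity
  have hεto : Tendsto ε atTop (nhds 0) := by
    have : Tendsto (fun m : ℕ => (1/2 : ℝ)^m) atTop (nhds 0) :=
      tendsto_pow_atTop_nhds_zero_of_lt_one (by norm_num) (by norm_num)
    simpa [hεdef, pow_succ] using this.mul_const (1/2 : ℝ)
  -- the signed-sum functional
  set S : ∀ m : ℕ, (Fin m → E) → (Fin m → Bool) → E :=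
    fun m Wf σ => ∑ j, (if σ j then (1:ℝ) else -1) • Wf j with hSdef
  -- existence of a good next vector
  have hstep : ∀ (m : ℕ) (Wf : Fin m → E), ∃ x : E,
      ‖x‖ ≤ 1 ∧ 1 - ε m < ‖x‖ ∧
      (∀ i, ‖y i + x‖ < 1 + ε m ∧ ‖y i - x‖ < 1 + ε m) ∧
      (∀ σ : Fin m → Bool, ‖S m Wf σ + x‖ ≤ max 2 (‖S m Wf σ‖ + ε m) ∧
        ‖S m Wf σ - x‖ ≤ max 2 (‖S m Wf σ‖ + ε m)) := by
    intro m Wf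
    set ι := Fin N ⊕ {σ : Fin m → Bool // 1 ≤ ‖S m Wf σ‖} with hιdef
    set z : ι → E := Sum.elim y (fun σ => ‖S m Wf σ.1‖⁻¹ • S m Wf σ.1) with hzdef
    have hz : ∀ i, ‖z i‖ = 1 := by
      rintro (i | ⟨σ, hσ⟩)
      · exact hy i
      · have h0 : ‖S m Wf σ‖ ≠ 0 := by positivity
        simp [hzdef, norm_smul, abs_of_nonneg (inv_nonneg.2 (norm_nonneg _)),
          inv_mul_cancel₀ h0]
    obtain ⟨x, hx1, hx2, hx3⟩ := asq_fin hX z hz (hεpos m)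
    refine ⟨x, hx1, hx2, fun i => hx3 (Sum.inl i), ?_⟩
    intro σ
    by_cases hσ : 1 ≤ ‖S m Wf σ‖
    · have hpos : (0:ℝ) < ‖S m Wf σ‖ := lt_of_lt_of_le one_pos hσ
      have hnz : ‖S m Wf σ‖ ≠ 0 := ne_of_gt hpos
      have hdiff : ‖S m Wf σ - ‖S m Wf σ‖⁻¹ • S m Wf σ‖ = ‖S m Wf σ‖ - 1 := by
        have : S m Wf σ - ‖S m Wf σ‖⁻¹ • S m Wf σ = (1 - ‖S m Wf σ‖⁻¹) • S m Wf σ := by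
          rw [sub_smul, one_smul]
        rw [this, norm_smul, Real.norm_eq_abs,
          abs_of_nonneg (by rw [sub_nonneg]; exact inv_le_one_of_one_le₀ hσ),
          sub_mul, one_mul, inv_mul_cancel₀ hnz]
      have h3 := hx3 (Sum.inr ⟨σ, hσ⟩)
      simp only [hzdef, Sum.elim_inr] at h3
      constructor
      · refine le_max_of_le_right ?_
        calc ‖S m Wf σ + x‖
            ≤ ‖S m Wf σ - ‖S m Wf σ‖⁻¹ • S m Wf σ‖ + ‖‖S m Wf σ‖⁻¹ • S m Wf σ + x‖ := by
              have h4 : S m Wf σ + x =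
                  (S m Wf σ - ‖S m Wf σ‖⁻¹ • S m Wf σ) + (‖S m Wf σ‖⁻¹ • S m Wf σ + x) := by
                abel
              rw [h4]; exact norm_add_le _ _
          _ ≤ (‖S m Wf σ‖ - 1) + (1 + ε m) := by
              rw [hdiff]; exact add_le_add le_rfl h3.1.le
          _ = ‖S m Wf σ‖ + ε m := by ring
      · refine le_max_of_le_right ?_
        calc ‖S m Wf σ - x‖
            ≤ ‖S m Wf σ - ‖S m Wf σ‖⁻¹ • S m Wf σ‖ + ‖‖S m Wf σ‖⁻¹ • S m Wf σ - x‖ := by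
              have : S m Wf σ - x =
                  (S m Wf σ - ‖S m Wf σ‖⁻¹ • S m Wf σ) + (‖S m Wf σ‖⁻¹ • S m Wf σ - x) := by
                abel
              rw [this]; exact norm_add_le _ _
          _ ≤ (‖S m Wf σ‖ - 1) + (1 + ε m) := by
              rw [hdiff]; exact add_le_add le_rfl h3.2.le
          _ = ‖S m Wf σ‖ + ε m := by ring
    · push_neg at hσ
      have hb : ‖S m Wf σ‖ + ‖x‖ ≤ 2 := by linarith [hx1]
      exact ⟨le_max_of_le_left ((norm_add_le _ _).trans hb),
             le_max_of_le_left ((norm_sub_le _ _).trans hb)⟩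
  choose step hGood using hstep
  -- construct the sequence by recursion
  let Wfull : ∀ m : ℕ, Fin m → E := fun m =>
    Nat.rec Fin.elim0 (fun m ih => Fin.snoc ih (step m ih)) m
  let W : ℕ → E := fun m => step m (Wfull m)
  have hWfull : ∀ m, Wfull m = fun j : Fin m => W j := by
    intro m
    induction m with
    | zero => funext j; exact j.elim0
    | succ m ih =>
      have hs : Wfull (m+1) = Fin.snoc (Wfull m) (W m) := rfl
      rw [hs, ih]
      funext j
      refine Fin.lastCases ?_ ?_ j
      · simp
      · intro j; simp
  have hGoodW : ∀ m, ‖W m‖ ≤ 1 ∧ 1 - ε m < ‖W m‖ ∧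
      (∀ i, ‖y i + W m‖ < 1 + ε m ∧ ‖y i - W m‖ < 1 + ε m) ∧
      (∀ σ : Fin m → Bool,
        ‖S m (fun j => W j) σ + W m‖ ≤ max 2 (‖S m (fun j => W j) σ‖ + ε m) ∧
        ‖S m (fun j => W j) σ - W m‖ ≤ max 2 (‖S m (fun j => W j) σ‖ + ε m)) := by
    intro m
    rw [show (fun j : Fin m => W j) = Wfull m from (hWfull m).symm]
    exact hGood m (Wfull m)
  -- signed sums over prefixes
  set T : ℕ → (ℕ → Bool) → E :=
    fun m σ => ∑ j : Fin m, (if σ j then (1:ℝ) else -1) • W j with hTdef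
  have hTsucc : ∀ m σ, T (m+1) σ = T m σ + (if σ m then (1:ℝ) else -1) • W m := by
    intro m σ
    simp [hTdef, Fin.sum_univ_castSucc]
  have hT3 : ∀ m (σ : ℕ → Bool), ‖T m σ‖ ≤ 3 - (1/2:ℝ)^m := by
    intro m
    induction m with
    | zero => intro σ; simp [hTdef]
    | succ m ih =>
      intro σ
      have hεm : ε m = (1/2:ℝ)^(m+1) := rfl
      have hpow : (1/2:ℝ)^(m+1) ≤ 1 := by
        apply pow_le_one₀ <;> norm_num
      have hST : S m (fun j : Fin m => W j) (fun j => σ j) = T m σ := rfl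
      have hbd := (hGoodW m).2.2.2 (fun j : Fin m => σ j)
      rw [hST] at hbd
      rw [hTsucc m σ]
      by_cases hσm : σ m
      · have := hbd.1
        rw [hσm] at *
        calc ‖T m σ + (if True then (1:ℝ) else -1) • W m‖ = ‖T m σ + W m‖ := by simp
          _ ≤ max 2 (‖T m σ‖ + ε m) := hbd.1
          _ ≤ 3 - (1/2:ℝ)^(m+1) := by
              apply max_le
              · linarith
              · have := ih σ
                rw [hεm]
                have h2 : (1/2:ℝ)^(m+1) = (1/2:ℝ)^m * (1/2) := pow_succ _ _
                nlinarith [pow_pos (by norm_num : (0:ℝ) < 1/2) m]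
      · calc ‖T m σ + (if σ m then (1:ℝ) else -1) • W m‖ = ‖T m σ - W m‖ := by
              simp [hσm, sub_eq_add_neg]
          _ ≤ max 2 (‖T m σ‖ + ε m) := hbd.2
          _ ≤ 3 - (1/2:ℝ)^(m+1) := by
              apply max_le
              · have : (1/2:ℝ)^(m+1) ≤ 1 := by apply pow_le_one₀ <;> norm_num
                linarith
              · have := ih σ
                rw [hεm]
                have h2 : (1/2:ℝ)^(m+1) = (1/2:ℝ)^m * (1/2) := pow_succ _ _
                nlinarith [pow_pos (by norm_num : (0:ℝ) < 1/2) m]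
  -- weak nullness
  have hweak : ∀ f : E →L[ℝ] ℝ, Tendsto (fun m => f (W m)) atTop (nhds 0) := by
    intro f
    have hsum : ∀ m, ∑ j ∈ Finset.range m, |f (W j)| ≤ 3 * ‖f‖ := by
      intro m
      set σ : ℕ → Bool := fun j => decide (0 ≤ f (W j)) with hσdef
      have hfT : f (T m σ) = ∑ j ∈ Finset.range m, |f (W j)| := by
        rw [hTdef]
        rw [map_sum, Fin.sum_univ_eq_sum_range (fun j => f ((if σ j then (1:ℝ) else -1) • W j))]
        apply Finset.sum_congr rfl
        intro j _
        rw [map_smul, smul_eq_mul]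
        by_cases h : 0 ≤ f (W j)
        · simp [hσdef, h, abs_of_nonneg h]
        · push_neg at h
          simp [hσdef, not_le.mpr h, abs_of_neg h]
      calc ∑ j ∈ Finset.range m, |f (W j)| = f (T m σ) := hfT.symm
        _ ≤ |f (T m σ)| := le_abs_self _
        _ ≤ ‖f‖ * ‖T m σ‖ := by
            have := f.le_opNorm (T m σ)
            rwa [Real.norm_eq_abs] at this
        _ ≤ ‖f‖ * 3 := by
            refine mul_le_mul_of_nonneg_left ?_ (norm_nonneg _)
            have := hT3 m σ
            have : (0:ℝ) < (1/2:ℝ)^m := pow_pos (by norm_num) m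
            linarith [hT3 m σ]
        _ = 3 * ‖f‖ := by ring
    have hsummable : Summable (fun j => |f (W j)|) :=
      summable_of_sum_range_le (fun j => abs_nonneg _) hsum
    have := hsummable.tendsto_atTop_zero
    rw [tendsto_zero_iff_norm_tendsto_zero]
    simpa [Real.norm_eq_abs] using this
  -- norm convergences
  have hWle : ∀ m, ‖W m‖ ≤ 1 := fun m => (hGoodW m).1
  have hWnorm : Tendsto (fun m => ‖W m‖) atTop (nhds 1) := by
    have hlow : Tendsto (fun m => 1 - ε m) atTop (nhds 1) := by
      simpa using (tendsto_const_nhds.sub hεto)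
    have hup : Tendsto (fun m : ℕ => (1:ℝ)) atTop (nhds 1) := tendsto_const_nhds
    exact tendsto_of_tendsto_of_tendsto_of_le_of_le hlow hup
      (fun m => ((hGoodW m).2.1).le) (fun m => hWle m)
  have hy2 : ∀ (i : Fin N) m, 1 - ε m ≤ ‖y i + W m‖ ∧ 1 - ε m ≤ ‖y i - W m‖ := by
    intro i m
    have h2 : ‖y i + y i‖ = 2 := by
      have : y i + y i = (2:ℝ) • y i := (two_smul ℝ (y i)).symm
      rw [this, norm_smul, hy i]; norm_num
    have hplus := ((hGoodW m).2.2.1 i).1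
    have hminus := ((hGoodW m).2.2.1 i).2
    constructor
    · have h5 : ‖y i + y i‖ - ‖y i - W m‖ ≤ ‖y i + W m‖ := by
        have h4 : y i + W m = (y i + y i) - (y i - W m) := by abel
        rw [h4]; exact norm_sub_norm_le _ _
      rw [h2] at h5; linarith
    · have h5 : ‖y i + y i‖ - ‖y i + W m‖ ≤ ‖y i - W m‖ := by
        have h4 : y i - W m = (y i + y i) - (y i + W m) := by abel
        rw [h4]; exact norm_sub_norm_le _ _
      rw [h2] at h5; linarith
  have hyconv : ∀ i, Tendsto (fun m => ‖y i + W m‖) atTop (nhds 1) ∧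
      Tendsto (fun m => ‖y i - W m‖) atTop (nhds 1) := by
    intro i
    have hlow : Tendsto (fun m => 1 - ε m) atTop (nhds 1) := by
      simpa using (tendsto_const_nhds.sub hεto)
    have hup : Tendsto (fun m => 1 + ε m) atTop (nhds 1) := by
      simpa using (tendsto_const_nhds.add hεto)
    exact ⟨tendsto_of_tendsto_of_tendsto_of_le_of_le hlow hup
        (fun m => (hy2 i m).1) (fun m => ((hGoodW m).2.2.1 i).1.le),
      tendsto_of_tendsto_of_tendsto_of_le_of_le hlow hup
        (fun m => (hy2 i m).2) (fun m => ((hGoodW m).2.2.1 i).2.le)⟩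
  exact ⟨W, hWle, hWnorm, hyconv, hweak⟩

lemma tendsto_norm_add_perturb {a : E} {u u' : ℕ → E}
    (hc : Tendsto (fun m => ‖u m - u' m‖) atTop (nhds 0)) {c : ℝ}
    (h : Tendsto (fun m => ‖a + u m‖) atTop (nhds c)) :
    Tendsto (fun m => ‖a + u' m‖) atTop (nhds c) := by
  refine h.congr_dist (squeeze_zero (fun m => dist_nonneg) (fun m => ?_) hc)
  rw [Real.dist_eq]
  calc |‖a + u m‖ - ‖a + u' m‖| ≤ ‖(a + u m) - (a + u' m)‖ := abs_norm_sub_norm_le _ _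
    _ = ‖u m - u' m‖ := by rw [add_sub_add_left_eq_sub]

lemma tendsto_norm_sub_perturb {a : E} {u u' : ℕ → E}
    (hc : Tendsto (fun m => ‖u m - u' m‖) atTop (nhds 0)) {c : ℝ}
    (h : Tendsto (fun m => ‖a - u m‖) atTop (nhds c)) :
    Tendsto (fun m => ‖a - u' m‖) atTop (nhds c) := by
  refine h.congr_dist (squeeze_zero (fun m => dist_nonneg) (fun m => ?_) hc)
  rw [Real.dist_eq]
  calc |‖a - u m‖ - ‖a - u' m‖| ≤ ‖(a - u m) - (a - u' m)‖ := abs_norm_sub_norm_le _ _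
    _ = ‖u m - u' m‖ := by rw [sub_sub_sub_cancel_left, norm_sub_rev]

end AuxASQ

theorem statement15 (X : Type*) [NormedAddCommGroup X] [NormedSpace ℝ X] [CompleteSpace X]
    (hX : IsASQ X) (Y : Submodule ℝ X) (hYclosed : IsClosed (Y : Set X))
    (hSchur : HasSchurProperty (X ⧸ Y)) :
    IsASQ ↥Y := by
  intro N yv hyv
  set yX : Fin N → X := fun i => (yv i : X) with hyXdef
  have hyX : ∀ i, ‖yX i‖ = 1 := fun i => hyv i
  obtain ⟨W, hWle, hWnorm, hyconv, hweak⟩ := asq_weakly_null hX N yX hyX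
  -- the quotient map as a continuous linear map
  set q : X →L[ℝ] X ⧸ Y :=
    LinearMap.mkContinuous Y.mkQ 1
      (fun x => by simpa using Submodule.Quotient.norm_mk_le (S := Y) x) with hqdef
  -- Schur property gives norm convergence of the quotient images
  have hq0 : Tendsto (fun m => ‖q (W m)‖) atTop (nhds 0) := by
    have := hSchur (fun m => q (W m)) 0 (fun g => by simpa using hweak (g.comp q))
    simpa using this
  -- approximate W m by elements of Y
  have hε'to : Tendsto (fun m : ℕ => (1/2 : ℝ)^(m+1)) atTop (nhds 0) := by
    have : Tendsto (fun m : ℕ => (1/2 : ℝ)^m) atTop (nhds 0) :=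
      tendsto_pow_atTop_nhds_zero_of_lt_one (by norm_num) (by norm_num)
    simpa [pow_succ] using this.mul_const (1/2 : ℝ)
  have happrox : ∀ m, ∃ u : X, u ∈ Y ∧ ‖W m - u‖ < ‖q (W m)‖ + (1/2 : ℝ)^(m+1) := by
    intro m
    obtain ⟨z, hz1, hz2⟩ := Submodule.Quotient.norm_mk_lt
      (Submodule.Quotient.mk (W m) : X ⧸ Y) (show (0:ℝ) < (1/2 : ℝ)^(m+1) by positivity)
    refine ⟨W m - z, ?_, ?_⟩
    · have := (Submodule.Quotient.eq Y).mp hz1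
      simpa using Y.neg_mem this
    · have hq : ‖q (W m)‖ = ‖(Submodule.Quotient.mk (W m) : X ⧸ Y)‖ := rfl
      rw [hq]
      simpa using hz2
  choose v hvY hvlt using happrox
  have hdist : Tendsto (fun m => ‖W m - v m‖) atTop (nhds 0) := by
    refine squeeze_zero (fun m => norm_nonneg _) (fun m => (hvlt m).le) ?_
    simpa using hq0.add hε'to
  -- the normalized sequence in Y
  set r : ℕ → ℝ := fun m => max 1 ‖v m‖ with hrdef
  have hr1 : ∀ m, (1:ℝ) ≤ r m := fun m => le_max_left _ _
  have hrpos : ∀ m, (0:ℝ) < r m := fun m => lt_of_lt_of_le one_pos (hr1 m)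
  set w : ℕ → ↥Y := fun m => (r m)⁻¹ • (⟨v m, hvY m⟩ : ↥Y) with hwdef
  have hwX : ∀ m, ((w m : ↥Y) : X) = (r m)⁻¹ • v m := fun m => rfl
  have hv1 : Tendsto (fun m => ‖v m‖) atTop (nhds 1) := by
    refine hWnorm.congr_dist (squeeze_zero (fun m => dist_nonneg) (fun m => ?_) hdist)
    rw [Real.dist_eq]
    exact abs_norm_sub_norm_le _ _
  have hr : Tendsto r atTop (nhds 1) := by
    have := (tendsto_const_nhds (x := (1:ℝ)) (f := atTop (α := ℕ))).max hv1
    simpa using this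
  have hrinv : Tendsto (fun m => (r m)⁻¹) atTop (nhds 1) := by
    have := hr.inv₀ one_ne_zero
    simpa using this
  have hnormw : ∀ m, ‖(w m : X)‖ = (r m)⁻¹ * ‖v m‖ := by
    intro m
    rw [hwX m, norm_smul, Real.norm_eq_abs, abs_of_nonneg (inv_nonneg.2 (hrpos m).le)]
  have hclose : Tendsto (fun m => ‖W m - (w m : X)‖) atTop (nhds 0) := by
    have hb : ∀ m, ‖W m - (w m : X)‖ ≤ ‖W m - v m‖ + |(r m)⁻¹ - 1| * ‖v m‖ := by
      intro m
      have h1 : W m - (w m : X) = (W m - v m) + (v m - (r m)⁻¹ • v m) := by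
        rw [hwX m]; abel
      have h2 : ‖v m - (r m)⁻¹ • v m‖ = |(r m)⁻¹ - 1| * ‖v m‖ := by
        have : v m - (r m)⁻¹ • v m = -(((r m)⁻¹ - 1) • v m) := by
          rw [sub_smul, one_smul]; abel
        rw [this, norm_neg, norm_smul, Real.norm_eq_abs]
      rw [h1]
      exact (norm_add_le _ _).trans (by rw [h2])
    have hlim : Tendsto (fun m => ‖W m - v m‖ + |(r m)⁻¹ - 1| * ‖v m‖) atTop (nhds 0) := by
      have := hdist.add (((hrinv.sub (tendsto_const_nhds : Tendsto (fun _ : ℕ => (1:ℝ)) atTop (nhds 1))).abs).mul hv1)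
      simpa using this
    exact squeeze_zero (fun m => norm_nonneg _) hb hlim
  refine ⟨w, ?_, ?_, ?_⟩
  · intro m
    show ‖(w m : X)‖ ≤ 1
    rw [hnormw m]
    calc (r m)⁻¹ * ‖v m‖ ≤ (r m)⁻¹ * r m :=
          mul_le_mul_of_nonneg_left (le_max_right _ _) (inv_nonneg.2 (hrpos m).le)
      _ = 1 := inv_mul_cancel₀ (hrpos m).ne'
  · have : Tendsto (fun m => (r m)⁻¹ * ‖v m‖) atTop (nhds 1) := by
      have := hrinv.mul hv1
      simpa using this
    exact this.congr (fun m => (hnormw m).symm)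
  · intro i
    constructor
    · have h := tendsto_norm_add_perturb (a := yX i) (u := W) (u' := fun m => (w m : X))
        hclose (hyconv i).1
      exact h.congr (fun m => rfl)
    · have h := tendsto_norm_sub_perturb (a := yX i) (u := W) (u' := fun m => (w m : X))
        hclose (hyconv i).2
      exact h.congr (fun m => rfl)
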